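/- Let μ ∈ ℂ, let p₁, p₂, p₃ ∈ ℂ with p₁ + p₂ + p₃ = 1, and let x, y, z ∈ ℂ satisfy the μ-Markoff equation x² + y² + z² − xyz = μ, with xyz ≠ 0 and x² ≠ μ, y² ≠ μ, z² ≠ μ. Then Ψ_{μ,p₂,p₃}(y,z;x) + Ψ_{μ,p₃,p₁}(z,x;y) + Ψ_{μ,p₁,p₂}(x,y;z) = 1. -/

import Mathlib

/-- The weighted edge value
`Ψ_{μ,p,q}(x,y;z) = z/(xy) − (1/2 − z/(xy))(p·μ/(x²−μ) + q·μ/(y²−μ))`. -/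
noncomputable def PsiW (μ p q x y z : ℂ) : ℂ :=
  z / (x * y) - (1 / 2 - z / (x * y)) * (p * μ / (x ^ 2 - μ) + q * μ / (y ^ 2 - μ))

/-!
Collecting the three edge values by weight, `p₁ μ/(x² − μ)` appears with coefficient
`−(1 − y/(zx) − z/(xy))`, and on the Markoff surface `1 − y/(zx) − z/(xy) = (x² − μ)/(xyz)`.
So every weighted term contributes `−pᵢ μ/(xyz)`, which add up to `−μ/(xyz)`, while the unweighted
part is `x/(yz) + y/(zx) + z/(xy) = (x² + y² + z²)/(xyz) = 1 + μ/(xyz)`.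
-/

section Markoff

variable {K : Type*} [Field K] {μ x y z : K}

theorem div_add_div_add_div_of_markoff (h : x ^ 2 + y ^ 2 + z ^ 2 - x * y * z = μ)
    (hx₀ : x ≠ 0) (hy₀ : y ≠ 0) (hz₀ : z ≠ 0) :
    x / (y * z) + y / (z * x) + z / (x * y) = 1 + μ / (x * y * z) := by
  subst h
  field_simp
  ring

theorem one_sub_div_sub_div_of_markoff (h : x ^ 2 + y ^ 2 + z ^ 2 - x * y * z = μ)
    (hx₀ : x ≠ 0) (hy₀ : y ≠ 0) (hz₀ : z ≠ 0) :
    1 - y / (z * x) - z / (x * y) = (x ^ 2 - μ) / (x * y * z) := by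
  subst h
  field_simp
  ring

theorem one_sub_div_sub_div_mul_div_of_markoff (h : x ^ 2 + y ^ 2 + z ^ 2 - x * y * z = μ)
    (hx₀ : x ≠ 0) (hy₀ : y ≠ 0) (hz₀ : z ≠ 0) (hx : x ^ 2 ≠ μ) :
    (1 - y / (z * x) - z / (x * y)) * (μ / (x ^ 2 - μ)) = μ / (x * y * z) := by
  rw [one_sub_div_sub_div_of_markoff h hx₀ hy₀ hz₀, div_mul_div_comm, mul_comm (x ^ 2 - μ),
    mul_div_mul_right _ _ (sub_ne_zero.mpr hx)]

end Markoff

/-- if `p₁ + p₂ + p₃ = 1` and `(x,y,z)` satisfies the μ-Markoff equation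
with `xyz ≠ 0` and `x², y², z² ≠ μ`, then
`Ψ_{μ,p₂,p₃}(y,z;x) + Ψ_{μ,p₃,p₁}(z,x;y) + Ψ_{μ,p₁,p₂}(x,y;z) = 1`. -/
theorem PsiW_vertex_sum_eq_one (μ p₁ p₂ p₃ x y z : ℂ) (hp : p₁ + p₂ + p₃ = 1)
    (hmarkoff : x ^ 2 + y ^ 2 + z ^ 2 - x * y * z = μ)
    (hxyz : x * y * z ≠ 0) (hx : x ^ 2 ≠ μ) (hy : y ^ 2 ≠ μ) (hz : z ^ 2 ≠ μ) :
    PsiW μ p₂ p₃ y z x + PsiW μ p₃ p₁ z x y + PsiW μ p₁ p₂ x y z = 1 := by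
  obtain ⟨⟨hx₀, hy₀⟩, hz₀⟩ : (x ≠ 0 ∧ y ≠ 0) ∧ z ≠ 0 := by
    simpa only [mul_ne_zero_iff] using hxyz
  have h₁ := one_sub_div_sub_div_mul_div_of_markoff hmarkoff hx₀ hy₀ hz₀ hx
  have h₂ := one_sub_div_sub_div_mul_div_of_markoff (by linear_combination hmarkoff) hy₀ hz₀ hx₀ hy
  have h₃ := one_sub_div_sub_div_mul_div_of_markoff (by linear_combination hmarkoff) hz₀ hx₀ hy₀ hz
  unfold PsiW
  linear_combination div_add_div_add_div_of_markoff hmarkoff hx₀ hy₀ hz₀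
    - p₁ * h₁ - p₂ * h₂ - p₃ * h₃ - μ / (x * y * z) * hp
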